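/- Let P be a path in T with vertex sequence p(1),…,p(k), let u be a vertex not on P that is adjacent in T to the endpoint p(k), and let P' = P ∪ {u}. Then S̄(P') = S̄(P) + (2/vt)·w_{T_u}·(w(T) − w_{T_u})·d(P,u). -/

import Mathlib

open scoped ENNReal

noncomputable section

/-- A finite tree with positive edge lengths, nonnegative vertex weights,
and a positive cruising speed. -/
structure WeightedTree (V : Type*) [Fintype V] where
  G : SimpleGraph V
  isTree : G.IsTree
  len : Sym2 V → ℝ
  len_pos : ∀ e ∈ G.edgeSet, 0 < len e
  w : V → ℝ
  w_nonneg : ∀ v, 0 ≤ w v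
  vt : ℝ
  vt_pos : 0 < vt

namespace WeightedTree

variable {V : Type*} [Fintype V] [DecidableEq V] (T : WeightedTree V)

/-- `d x y`: the length of the unique path between `x` and `y`. -/
def d (x y : V) : ℝ :=
  (((T.isTree.existsUnique_path x y).choose).edges.map T.len).sum

/-- The closest vertex of the list `l` (the vertex sequence of a path) to `v`. -/
def closest (l : List V) (v : V) : V :=
  if h : ∃ u ∈ l, ∀ u' ∈ l, T.d u v ≤ T.d u' v then h.choose else v

/-- `d(P,v)`: the distance from the path with vertex sequence `l` to `v`. -/
def dP (l : List V) (v : V) : ℝ := T.d (T.closest l v) v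

/-- The weight of the branch of the vertex `q` with respect to the path with
vertex sequence `l`: the total weight of all vertices whose closest vertex on
the path is `q`. -/
def wBranch (l : List V) (q : V) : ℝ :=
  ∑ v ∈ Finset.univ.filter (fun v => T.closest l v = q), T.w v

/-- `w(T)`: total weight of the tree. -/
def wT : ℝ := ∑ v, T.w v

/-- `d̄_P(û,p) = ∑_j w_{T_{p(j)}} d(p(j), p)` for the path with vertex sequence `l`. -/
def dbar (l : List V) (p : V) : ℝ := (l.map (fun q => T.wBranch l q * T.d q p)).sum

/-- `s_p(P) = (1/vt) d̄_P(û,p)` for a vertex `p` of the path. -/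
def sOn (l : List V) (p : V) : ℝ := (1 / T.vt) * T.dbar l p

/-- `s_i(P) = (1/vt) d̄_P(û,p(i))`, where `p(i)` is the closest vertex of the path to `v_i`. -/
def s (l : List V) (v : V) : ℝ := T.sOn l (T.closest l v)

/-- Mean service time `S̄(P)`. -/
def Sbar (l : List V) : ℝ := ∑ v, T.w v * T.s l v

/-- Second moment `S̄²(P)` of the service time. -/
def S2bar (l : List V) : ℝ := ∑ v, T.w v * (T.s l v) ^ 2

/-- `T̄1(P) = (1/vt) ∑ w_i d(P, v_i)`. -/
def T1 (l : List V) : ℝ := (1 / T.vt) * ∑ v, T.w v * T.dP l v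

/-- `T̄2(P) = (1/vt) ∑ w_i d̄_P(û, p(i))`. -/
def T2 (l : List V) : ℝ := (1 / T.vt) * ∑ v, T.w v * T.dbar l (T.closest l v)

/-- The M/G/1 queueing delay `Q̄(P)`, valued in `[0,∞]`. -/
def Qbar (lam : ℝ) (l : List V) : ℝ≥0∞ :=
  if 0 < 1 - lam * T.Sbar l then
    ENNReal.ofReal (lam * T.S2bar l / (2 * (1 - lam * T.Sbar l)))
  else ⊤

/-- The M/G/1 queueing delay `Q̄(P)` as an extended real. -/
def QbarE (lam : ℝ) (l : List V) : EReal :=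
  if 0 < 1 - lam * T.Sbar l then
    ((lam * T.S2bar l / (2 * (1 - lam * T.Sbar l)) : ℝ) : EReal)
  else ⊤

/-- `|P|`: the total length of the path `P`. -/
def plen {a b : V} (P : T.G.Walk a b) : ℝ := (P.edges.map T.len).sum

/-- The objective `F(P) = α1·|P| + α2·(β·(Q̄(P)+T̄2(P)) + (1-β)·T̄1(P))`. -/
def F (α1 α2 β lam : ℝ) {a b : V} (P : T.G.Walk a b) : EReal :=
  ((α1 * T.plen P : ℝ) : EReal) +
    (α2 : EReal) *
      ((β : EReal) * (T.QbarE lam P.support + ((T.T2 P.support : ℝ) : EReal)) +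
        (((1 - β) * T.T1 P.support : ℝ) : EReal))

end WeightedTree

/-
Every vertex `v` is served from its gate `p(v)` on the path (the vertex of the path that lies on
the path from every vertex of the path to `v`), so `vt · S̄(P) = ∑_{v,v'} w_v w_{v'} d(p(v'), p(v))`.
Appending `u` only moves the gates of the branch `T_u` from `p(k)` to `u`, and
`d(q, u) = d(q, p(k)) + d(p(k), u)` for every `q` on `P`; hence every ordered pair with exactly
one vertex in `T_u` gains `d(P, u)`, and those pairs carry total weight `2 w_{T_u} (w(T) - w_{T_u})`.
-/

namespace SimpleGraph.Walk

variable {V : Type*} {G : SimpleGraph V}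

lemma IsPath.append {x y z : V} {p : G.Walk x y} {q : G.Walk y z} (hp : p.IsPath)
    (hq : q.IsPath) (h : ∀ a ∈ p.support, a ∈ q.support → a = y) : (p.append q).IsPath := by
  have hq' := hq.support_nodup
  rw [← q.cons_tail_support, List.nodup_cons] at hq'
  rw [isPath_def, support_append, List.nodup_append]
  refine ⟨hp.support_nodup, hq'.2, ?_⟩
  rintro a ha _ ha' rfl
  obtain rfl := h a ha (List.mem_of_mem_tail ha')
  exact hq'.1 ha'

end SimpleGraph.Walk

namespace WeightedTree

open SimpleGraph Walk

variable {V : Type*} [Fintype V] (T : WeightedTree V)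

def uniquePath (x y : V) : T.G.Walk x y := (T.isTree.existsUnique_path x y).choose

lemma uniquePath_isPath (x y : V) : (T.uniquePath x y).IsPath :=
  (T.isTree.existsUnique_path x y).choose_spec.1

lemma uniquePath_eq {x y : V} {p : T.G.Walk x y} (hp : p.IsPath) : T.uniquePath x y = p :=
  ((T.isTree.existsUnique_path x y).choose_spec.2 p hp).symm

lemma len_pos_of_mem_edges {x y : V} (p : T.G.Walk x y) :
    ∀ a ∈ p.edges.map T.len, 0 < a := by
  simp only [List.mem_map, forall_exists_index, and_imp, forall_apply_eq_imp_iff₂]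
  exact fun e he => T.len_pos e (p.edges_subset_edgeSet he)

variable {T}

lemma d_eq_sum_len {x y : V} {p : T.G.Walk x y} (hp : p.IsPath) :
    T.d x y = (p.edges.map T.len).sum := by
  rw [d, ← uniquePath, T.uniquePath_eq hp]

variable (T)

lemma d_self (x : V) : T.d x x = 0 := by
  simp [d_eq_sum_len IsPath.nil]

lemma d_comm (x y : V) : T.d x y = T.d y x := by
  rw [d_eq_sum_len (T.uniquePath_isPath y x).reverse, edges_reverse, List.map_reverse,
    List.sum_reverse, d, ← uniquePath]

lemma d_nonneg (x y : V) : 0 ≤ T.d x y :=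
  List.sum_nonneg fun a ha => (T.len_pos_of_mem_edges _ a ha).le

lemma d_pos {x y : V} (h : x ≠ y) : 0 < T.d x y := by
  rw [d_eq_sum_len (T.uniquePath_isPath x y)]
  refine List.sum_pos _ (T.len_pos_of_mem_edges _) ?_
  simpa [edges_eq_nil] using not_nil_of_ne h

lemma d_le_zero {x y : V} : T.d x y ≤ 0 ↔ x = y := by
  refine ⟨fun h => ?_, fun h => by rw [h, d_self]⟩
  by_contra hne
  exact (T.d_pos hne).not_ge h

variable {T}

lemma d_eq_add_of_isPath_append {x y z : V} {p : T.G.Walk x y} {q : T.G.Walk y z}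
    (h : (p.append q).IsPath) : T.d x z = T.d x y + T.d y z := by
  rw [d_eq_sum_len h, edges_append, List.map_append, List.sum_append,
    d_eq_sum_len h.of_append_left, d_eq_sum_len h.of_append_right]

lemma d_eq_add_of_mem_support {x y z : V} {p : T.G.Walk x z} (hp : p.IsPath)
    (hy : y ∈ p.support) : T.d x z = T.d x y + T.d y z := by
  obtain ⟨q, r, -, -, rfl⟩ := hp.mem_support_iff_exists_append.mp hy
  exact d_eq_add_of_isPath_append hp

lemma support_uniquePath_subset {a b q g : V} {p : T.G.Walk a b} (hp : p.IsPath)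
    (hq : q ∈ p.support) (hg : g ∈ p.support) : (T.uniquePath q g).support ⊆ p.support := by
  classical
  by_cases hg' : g ∈ (p.dropUntil q hq).support
  · rw [T.uniquePath_eq ((hp.dropUntil hq).takeUntil hg')]
    exact fun x hx => p.support_dropUntil_subset_support hq
      ((p.dropUntil q hq).support_takeUntil_subset_support hg' hx)
  · have hg'' : g ∈ (p.takeUntil q hq).support := by
      rw [← p.take_spec hq, mem_support_append_iff] at hg
      exact hg.resolve_right hg'
    rw [T.uniquePath_eq ((hp.takeUntil hq).dropUntil hg'').reverse, support_reverse]
    intro x hx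
    exact p.support_takeUntil_subset_support hq
      ((p.takeUntil q hq).support_dropUntil_subset_support hg'' (List.mem_reverse.mp hx))

lemma d_eq_add_d_of_adj {a b u q : V} {P : T.G.Walk a b} (hP : P.IsPath) (hadj : T.G.Adj b u)
    (hu : u ∉ P.support) (hq : q ∈ P.support) : T.d q u = T.d q b + T.d b u := by
  have hpath := (T.uniquePath_isPath q b).concat
    (fun h => hu (support_uniquePath_subset hP hq P.end_mem_support h)) hadj
  rw [concat_eq_append] at hpath
  exact d_eq_add_of_isPath_append hpath

variable (T)

/-- `g ∈ l` is a gate of `l` towards `v`: all paths from `l` to `v` pass through `g`. -/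
def IsGate (l : List V) (v g : V) : Prop :=
  g ∈ l ∧ ∀ q ∈ l, T.d q v = T.d q g + T.d g v

variable {T}

lemma IsGate.d_le {l : List V} {v g q : V} (hg : T.IsGate l v g) (hq : q ∈ l) :
    T.d g v ≤ T.d q v := by
  linarith [hg.2 q hq, T.d_nonneg q g]

lemma IsGate.eq {l : List V} {v g₁ g₂ : V} (h₁ : T.IsGate l v g₁) (h₂ : T.IsGate l v g₂) :
    g₁ = g₂ :=
  T.d_le_zero.mp (by linarith [h₁.2 g₂ h₂.1, h₂.2 g₁ h₁.1, T.d_comm g₁ g₂])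

variable [DecidableEq V]

lemma closest_eq_of_isGate {l : List V} {v g : V} (hg : T.IsGate l v g) :
    T.closest l v = g := by
  have hex : ∃ c ∈ l, ∀ q ∈ l, T.d c v ≤ T.d q v := ⟨g, hg.1, fun q => hg.d_le⟩
  rw [closest, dif_pos hex]
  obtain ⟨hc, hmin⟩ := hex.choose_spec
  exact T.d_le_zero.mp (by linarith [hg.2 _ hc, hmin g hg.1])

/-- The vertex of a path nearest to `v` is a gate, because the path from it to `v` meets the
path only at that vertex. -/
lemma exists_isGate {a b : V} {p : T.G.Walk a b} (hp : p.IsPath) (v : V) :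
    ∃ g, T.IsGate p.support v g := by
  obtain ⟨g, hg, hmin⟩ := p.support.toFinset.exists_min_image (fun q => T.d q v)
    ⟨a, by simp⟩
  rw [List.mem_toFinset] at hg
  refine ⟨g, hg, fun q hq => d_eq_add_of_isPath_append <|
    (T.uniquePath_isPath q g).append (T.uniquePath_isPath g v) fun x hxq hxv => ?_⟩
  have hx : x ∈ p.support := support_uniquePath_subset hp hq hg hxq
  have hsplit := d_eq_add_of_mem_support (T.uniquePath_isPath g v) hxv
  have hle := hmin x (List.mem_toFinset.mpr hx)
  exact T.d_le_zero.mp (by linarith [T.d_comm x g])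

lemma isGate_closest {a b : V} {p : T.G.Walk a b} (hp : p.IsPath) (v : V) :
    T.IsGate p.support v (T.closest p.support v) := by
  obtain ⟨g, hg⟩ := exists_isGate hp v
  rwa [closest_eq_of_isGate hg]

variable (T) in
def branchIndicator (l : List V) (q v : V) : ℝ := if T.closest l v = q then 1 else 0

section Concat

variable {a b u : V} {P : T.G.Walk a b} (hP : P.IsPath) (hadj : T.G.Adj b u)
  (hu : u ∉ P.support)
include hP hadj hu

lemma closest_support_of_adj : T.closest P.support u = b :=
  closest_eq_of_isGate ⟨P.end_mem_support, fun _ => d_eq_add_d_of_adj hP hadj hu⟩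

lemma closest_support_of_closest_concat_eq {v : V}
    (h : T.closest (P.concat hadj).support v = u) : T.closest P.support v = b := by
  have hg := isGate_closest (hP.concat hu hadj) v
  rw [h, support_concat] at hg
  have hb := hg.2 b (List.mem_append_left _ P.end_mem_support)
  refine closest_eq_of_isGate ⟨P.end_mem_support, fun q hq => ?_⟩
  rw [hg.2 q (List.mem_append_left _ hq), d_eq_add_d_of_adj hP hadj hu hq, hb]
  ring

lemma closest_concat_of_ne {v : V} (h : T.closest (P.concat hadj).support v ≠ u) :
    T.closest (P.concat hadj).support v = T.closest P.support v := by
  have hg := isGate_closest (hP.concat hu hadj) v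
  rw [support_concat] at *
  have hmem := List.mem_append.mp hg.1
  rw [List.mem_singleton] at hmem
  exact (closest_eq_of_isGate
    ⟨hmem.resolve_right h, fun q hq => hg.2 q (List.mem_append_left _ hq)⟩).symm

lemma d_closest_concat (v v' : V) :
    T.d (T.closest (P.concat hadj).support v') (T.closest (P.concat hadj).support v) =
      T.d (T.closest P.support v') (T.closest P.support v) +
        (T.branchIndicator (P.concat hadj).support u v *
            (1 - T.branchIndicator (P.concat hadj).support u v') +
          T.branchIndicator (P.concat hadj).support u v' *
            (1 - T.branchIndicator (P.concat hadj).support u v)) * T.d b u := by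
  have hcases : ∀ x, (T.closest (P.concat hadj).support x = u ∧ T.closest P.support x = b ∧
        T.branchIndicator (P.concat hadj).support u x = 1) ∨
      (T.closest (P.concat hadj).support x = T.closest P.support x ∧
        T.branchIndicator (P.concat hadj).support u x = 0) := fun x => by
    by_cases h : T.closest (P.concat hadj).support x = u
    · exact .inl ⟨h, closest_support_of_closest_concat_eq hP hadj hu h, if_pos h⟩
    · exact .inr ⟨closest_concat_of_ne hP hadj hu h, if_neg h⟩
  have hmem x : T.closest P.support x ∈ P.support := (isGate_closest hP x).1
  rcases hcases v with ⟨hv, hv', hχv⟩ | ⟨hv, hχv⟩ <;>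
    rcases hcases v' with ⟨hw, hw', hχw⟩ | ⟨hw, hχw⟩ <;>
    rw [hv, hw, hχv, hχw] <;> (try rw [hv']) <;> (try rw [hw'])
  · simp [d_self]
  · rw [d_eq_add_d_of_adj hP hadj hu (hmem v')]; ring
  · rw [T.d_comm u, d_eq_add_d_of_adj hP hadj hu (hmem v), T.d_comm _ b]; ring
  · ring

end Concat

lemma dbar_eq_sum {l : List V} (hl : l.Nodup) (hcl : ∀ v, T.closest l v ∈ l) (p : V) :
    T.dbar l p = ∑ v, T.w v * T.d (T.closest l v) p := by
  rw [dbar, ← List.sum_toFinset _ hl, ← Finset.sum_fiberwise_of_maps_to (s := Finset.univ)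
    (t := l.toFinset) (g := T.closest l) fun v _ => List.mem_toFinset.mpr (hcl v)]
  refine Finset.sum_congr rfl fun q _ => ?_
  rw [wBranch, Finset.sum_mul]
  exact Finset.sum_congr rfl fun v hv => by rw [(Finset.mem_filter.mp hv).2]

lemma vt_mul_Sbar {l : List V} (hl : l.Nodup) (hcl : ∀ v, T.closest l v ∈ l) :
    T.vt * T.Sbar l = ∑ v, ∑ v', T.w v * T.w v' * T.d (T.closest l v') (T.closest l v) := by
  simp only [Sbar, s, sOn, dbar_eq_sum hl hcl, Finset.mul_sum]
  refine Finset.sum_congr rfl fun v _ => Finset.sum_congr rfl fun v' _ => ?_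
  field_simp [T.vt_pos.ne']

lemma wBranch_eq_sum (l : List V) (q : V) :
    T.wBranch l q = ∑ v, T.w v * T.branchIndicator l q v := by
  simp [wBranch, branchIndicator, Finset.sum_filter]

lemma wT_sub_wBranch_eq_sum (l : List V) (q : V) :
    T.wT - T.wBranch l q = ∑ v, T.w v * (1 - T.branchIndicator l q v) := by
  simp only [wT, wBranch_eq_sum, ← Finset.sum_sub_distrib, mul_sub, mul_one]

lemma vt_mul_Sbar_concat {a b u : V} {P : T.G.Walk a b} (hP : P.IsPath) (hadj : T.G.Adj b u)
    (hu : u ∉ P.support) :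
    T.vt * T.Sbar (P.concat hadj).support = T.vt * T.Sbar P.support +
      2 * T.wBranch (P.concat hadj).support u * (T.wT - T.wBranch (P.concat hadj).support u) *
        T.d b u := by
  have hP' := hP.concat hu hadj
  rw [vt_mul_Sbar hP'.support_nodup fun v => (isGate_closest hP' v).1,
    vt_mul_Sbar hP.support_nodup fun v => (isGate_closest hP v).1]
  simp only [d_closest_concat hP hadj hu, mul_add, Finset.sum_add_distrib]
  congr 1
  rw [show ∀ A B D : ℝ, 2 * A * B * D = (A * B + B * A) * D by intros; ring,
    wT_sub_wBranch_eq_sum, wBranch_eq_sum, Finset.sum_mul_sum, Finset.sum_mul_sum,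
    ← Finset.sum_add_distrib, Finset.sum_mul]
  refine Finset.sum_congr rfl fun v _ => ?_
  rw [← Finset.sum_add_distrib, Finset.sum_mul]
  refine Finset.sum_congr rfl fun v' _ => ?_
  ring

end WeightedTree

/-- extending a path `P` by an adjacent vertex `u` increases the mean
service time by `(2/vt)·w_{T_u}·(w(T) − w_{T_u})·d(P,u)`. -/
theorem sbar_concat {V : Type*} [Fintype V] [DecidableEq V] (T : WeightedTree V)
    {a b u : V} (P : T.G.Walk a b) (hP : P.IsPath)
    (hadj : T.G.Adj b u) (hu : u ∉ P.support) :
    T.Sbar (P.concat hadj).support =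
      T.Sbar P.support +
        (2 / T.vt) * T.wBranch (P.concat hadj).support u *
          (T.wT - T.wBranch (P.concat hadj).support u) * T.dP P.support u := by
  have hvt := T.vt_pos.ne'
  rw [WeightedTree.dP, WeightedTree.closest_support_of_adj hP hadj hu]
  refine mul_left_cancel₀ hvt ?_
  rw [WeightedTree.vt_mul_Sbar_concat hP hadj hu]
  field_simp
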